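/- Let Γ_{ij}{}^k ∈ ℝ (i,j,k ∈ {1,2}) be constant Christoffel symbols on ℝ² (a Type 𝒜 structure). Suppose the Ricci tensor is parallel (ρ_{jk;i} = 0 for all i,j,k) but the torsion tensor is not parallel (T^k{}_{;i} ≠ 0 for some i,k). Then the structure is flat: ρ_{jk} = 0 for all j,k. -/
import Mathlib


noncomputable section

open scoped BigOperators

/-- Curvature tensor of a Type 𝒜 connection (constant Christoffel symbols):
`R_{ijk}{}^l = Σ_m (Γ_{im}{}^l Γ_{jk}{}^m − Γ_{jm}{}^l Γ_{ik}{}^m)`. -/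
def curvC (Γ : Fin 2 → Fin 2 → Fin 2 → ℝ) (i j k l : Fin 2) : ℝ :=
  ∑ m : Fin 2, (Γ i m l * Γ j k m - Γ j m l * Γ i k m)

/-- Ricci tensor `ρ_{jk} = R_{1jk}{}^1 + R_{2jk}{}^2`. -/
def ricciC (Γ : Fin 2 → Fin 2 → Fin 2 → ℝ) (j k : Fin 2) : ℝ :=
  curvC Γ 0 j k 0 + curvC Γ 1 j k 1

/-- Covariant derivative of the Ricci tensor for constant Christoffel symbols:
`ρ_{jk;i} = −Σ_m (Γ_{ij}{}^m ρ_{mk} + Γ_{ik}{}^m ρ_{jm})`. -/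
def ricciCovC (Γ : Fin 2 → Fin 2 → Fin 2 → ℝ) (i j k : Fin 2) : ℝ :=
  -∑ m : Fin 2, (Γ i j m * ricciC Γ m k + Γ i k m * ricciC Γ j m)

/-- Torsion components `T^k = (1/2)(Γ_{12}{}^k − Γ_{21}{}^k)`. -/
def torC (Γ : Fin 2 → Fin 2 → Fin 2 → ℝ) (k : Fin 2) : ℝ :=
  (1 / 2) * (Γ 0 1 k - Γ 1 0 k)

/-- Covariant derivative of the torsion for constant Christoffel symbols:
`T^k{}_{;i} = Σ_m Γ_{im}{}^k T^m − (Γ_{i1}{}^1 + Γ_{i2}{}^2) T^k`. -/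
def torCovC (Γ : Fin 2 → Fin 2 → Fin 2 → ℝ) (i k : Fin 2) : ℝ :=
  (∑ m : Fin 2, Γ i m k * torC Γ m) - (Γ i 0 0 + Γ i 1 1) * torC Γ k

lemma key_prod (Γ : Fin 2 → Fin 2 → Fin 2 → ℝ)
    (hpar : ∀ i j k, ricciCovC Γ i j k = 0) :
    ∀ i k j l, torCovC Γ i k * ricciC Γ j l = 0 := by
  have h000 := hpar 0 0 0
  have h001 := hpar 0 0 1
  have h010 := hpar 0 1 0
  have h011 := hpar 0 1 1
  have h100 := hpar 1 0 0
  have h101 := hpar 1 0 1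
  have h110 := hpar 1 1 0
  have h111 := hpar 1 1 1
  simp only [ricciCovC, ricciC, curvC, Fin.sum_univ_two] at h000 h001 h010 h011 h100 h101 h110 h111
  have H0000 : torCovC Γ 0 0 * ricciC Γ 0 0 = 0 := by
    simp only [torCovC, torC, ricciC, curvC, Fin.sum_univ_two]
    linear_combination (1/4) * (Γ 1 0 1) * h001 - (1/4) * (Γ 0 1 1) * h100
  have H0001 : torCovC Γ 0 0 * ricciC Γ 0 1 = 0 := by
    simp only [torCovC, torC, ricciC, curvC, Fin.sum_univ_two]
    linear_combination (-1/4) * (Γ 1 0 0) * h001 + (1/4) * (Γ 0 1 0) * h100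
  have H0010 : torCovC Γ 0 0 * ricciC Γ 1 0 = 0 := by
    simp only [torCovC, torC, ricciC, curvC, Fin.sum_univ_two]
    linear_combination (-1/4) * (Γ 1 0 0) * h001 + (1/4) * (Γ 0 1 0) * h100
  have H0011 : torCovC Γ 0 0 * ricciC Γ 1 1 = 0 := by
    simp only [torCovC, torC, ricciC, curvC, Fin.sum_univ_two]
    linear_combination (-1/4) * (Γ 1 0 0) * h011 + (1/4) * (Γ 0 1 0) * h101
  have H0100 : torCovC Γ 0 1 * ricciC Γ 0 0 = 0 := by
    simp only [torCovC, torC, ricciC, curvC, Fin.sum_univ_two]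
    linear_combination (1/4) * (Γ 0 1 1) * h000 - (1/4) * (Γ 1 0 1) * h000 - (1/4) * (Γ 0 0 1) * h001 + (1/4) * (Γ 0 0 1) * h100
  have H0101 : torCovC Γ 0 1 * ricciC Γ 0 1 = 0 := by
    simp only [torCovC, torC, ricciC, curvC, Fin.sum_univ_two]
    linear_combination (-1/4) * (Γ 0 1 0) * h000 + (1/4) * (Γ 1 0 0) * h000 + (1/4) * (Γ 0 0 0) * h001 - (1/4) * (Γ 0 0 0) * h100
  have H0110 : torCovC Γ 0 1 * ricciC Γ 1 0 = 0 := by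
    simp only [torCovC, torC, ricciC, curvC, Fin.sum_univ_two]
    linear_combination (-1/4) * (Γ 0 1 0) * h000 + (1/4) * (Γ 1 0 0) * h000 + (1/4) * (Γ 0 0 0) * h001 - (1/4) * (Γ 0 0 0) * h100
  have H0111 : torCovC Γ 0 1 * ricciC Γ 1 1 = 0 := by
    simp only [torCovC, torC, ricciC, curvC, Fin.sum_univ_two]
    linear_combination (-1/4) * (Γ 0 1 0) * h001 + (1/4) * (Γ 1 0 0) * h001 + (1/4) * (Γ 0 0 0) * h011 - (1/4) * (Γ 0 0 0) * h101
  have H1000 : torCovC Γ 1 0 * ricciC Γ 0 0 = 0 := by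
    simp only [torCovC, torC, ricciC, curvC, Fin.sum_univ_two]
    linear_combination (-1/4) * (Γ 1 0 0) * h001 + (1/4) * (Γ 1 1 1) * h001 - (1/4) * (Γ 1 0 1) * h011 + (1/4) * (Γ 0 1 0) * h100 - (1/4) * (Γ 1 1 1) * h100 + (1/4) * (Γ 1 0 1) * h101
  have H1001 : torCovC Γ 1 0 * ricciC Γ 0 1 = 0 := by
    simp only [torCovC, torC, ricciC, curvC, Fin.sum_univ_two]
    linear_combination (-1/4) * (Γ 1 1 0) * h001 + (1/4) * (Γ 1 1 0) * h100 + (1/4) * (Γ 0 1 0) * h101 - (1/4) * (Γ 1 0 0) * h101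
  have H1010 : torCovC Γ 1 0 * ricciC Γ 1 0 = 0 := by
    simp only [torCovC, torC, ricciC, curvC, Fin.sum_univ_two]
    linear_combination (-1/4) * (Γ 1 1 0) * h001 + (1/4) * (Γ 1 1 0) * h100 + (1/4) * (Γ 0 1 0) * h101 - (1/4) * (Γ 1 0 0) * h101
  have H1011 : torCovC Γ 1 0 * ricciC Γ 1 1 = 0 := by
    simp only [torCovC, torC, ricciC, curvC, Fin.sum_univ_two]
    linear_combination (-1/4) * (Γ 1 1 0) * h011 + (1/4) * (Γ 1 1 0) * h101 + (1/4) * (Γ 0 1 0) * h111 - (1/4) * (Γ 1 0 0) * h111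
  have H1100 : torCovC Γ 1 1 * ricciC Γ 0 0 = 0 := by
    simp only [torCovC, torC, ricciC, curvC, Fin.sum_univ_two]
    linear_combination (-1/4) * (Γ 1 0 1) * h001 + (1/4) * (Γ 0 1 1) * h100
  have H1101 : torCovC Γ 1 1 * ricciC Γ 0 1 = 0 := by
    simp only [torCovC, torC, ricciC, curvC, Fin.sum_univ_two]
    linear_combination (1/4) * (Γ 1 0 0) * h001 - (1/4) * (Γ 0 1 0) * h100
  have H1110 : torCovC Γ 1 1 * ricciC Γ 1 0 = 0 := by
    simp only [torCovC, torC, ricciC, curvC, Fin.sum_univ_two]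
    linear_combination (1/4) * (Γ 1 0 0) * h001 - (1/4) * (Γ 0 1 0) * h100
  have H1111 : torCovC Γ 1 1 * ricciC Γ 1 1 = 0 := by
    simp only [torCovC, torC, ricciC, curvC, Fin.sum_univ_two]
    linear_combination (1/4) * (Γ 1 0 0) * h011 - (1/4) * (Γ 0 1 0) * h101
  intro i k j l
  fin_cases i <;> fin_cases k <;> fin_cases j <;> fin_cases l
  exacts [H0000, H0001, H0010, H0011, H0100, H0101, H0110, H0111, H1000, H1001, H1010, H1011, H1100, H1101, H1110, H1111]

/-- a Type 𝒜 structure with parallel Ricci tensor and non-parallel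
torsion is flat. -/
theorem typeA_symmetric_nonparallel_torsion_flat
    (Γ : Fin 2 → Fin 2 → Fin 2 → ℝ)
    (hpar : ∀ i j k, ricciCovC Γ i j k = 0)
    (hT : ∃ i k, torCovC Γ i k ≠ 0) :
    ∀ j k, ricciC Γ j k = 0 := by
  obtain ⟨i, k, hik⟩ := hT
  intro j l
  have h := key_prod Γ hpar i k j l
  rcases mul_eq_zero.mp h with h' | h'
  · exact absurd h' hik
  · exact h'
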